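/- arXiv:1410.1703 — 7 statements merged into one kernel-verified Lean document; each statement's English description precedes it below -/
import Mathlib

section
/- The function F is concave on ℝ^{I×J}. (Lemma 3.4 of the paper.) -/
/-- The function `F` from the paper:
`F(y) = Σ_{j=1}^m Σ_{i=1}^n (v_{σ_j(i),j} − v_{σ_j(i+1),j})·(1 − exp(−Σ_{k=1}^i y_{σ_j(k),j}))`,
with the convention `v_{σ_j(n+1),j} = 0`. -/
noncomputable def F (n m : ℕ) (v : Fin n → Fin m → ℝ) (σ : Fin m → Equiv.Perm (Fin n))
    (y : Fin n → Fin m → ℝ) : ℝ :=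
  ∑ j : Fin m, ∑ i : Fin n,
    (v (σ j i) j - if h : (i : ℕ) + 1 < n then v (σ j ⟨(i : ℕ) + 1, h⟩) j else 0) *
    (1 - Real.exp (-(∑ k ∈ Finset.Iic i, y (σ j k) j)))

/-! F is a nonnegative combination of the concave functions `y ↦ 1 - exp (-ℓ y)` with `ℓ` linear:
the weights `v_{σ_j(i),j} - v_{σ_j(i+1),j}` are nonnegative because `v` decreases along `σ_j`
and vanishes past the last bin. -/

open Finset Real

theorem ConcaveOn.finset_sum {𝕜 E β ι : Type*} [Semiring 𝕜] [PartialOrder 𝕜] [AddCommMonoid E]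
    [AddCommMonoid β] [PartialOrder β] [IsOrderedAddMonoid β] [SMul 𝕜 E] [Module 𝕜 β]
    {s : Set E} (hs : Convex 𝕜 s) {t : Finset ι} {f : ι → E → β}
    (hf : ∀ i ∈ t, ConcaveOn 𝕜 s (f i)) :
    ConcaveOn 𝕜 s fun x => ∑ i ∈ t, f i x := by
  simp_rw [← Finset.sum_apply]
  exact Finset.sum_induction _ (ConcaveOn 𝕜 s) (fun _ _ => ConcaveOn.add)
    (concaveOn_const (0 : β) hs) hf

theorem concaveOn_one_sub_exp_neg : ConcaveOn ℝ Set.univ fun t : ℝ => 1 - exp (-t) :=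
  (concaveOn_const 1 convex_univ).sub (convexOn_exp.comp_linearMap (-LinearMap.id))

theorem Antitone.sub_next_nonneg {α : Type*} [AddCommGroup α] [PartialOrder α]
    [IsOrderedAddMonoid α] {n : ℕ} {w : Fin n → α} (hw : Antitone w) (hw₀ : ∀ i, 0 ≤ w i)
    (i : Fin n) : 0 ≤ w i - if h : (i : ℕ) + 1 < n then w ⟨i + 1, h⟩ else 0 := by
  split_ifs with h
  · exact sub_nonneg.2 (hw (Fin.le_def.2 (Nat.le_succ i)))
  · simpa using hw₀ i

def prefixSum {R : Type*} [CommSemiring R] {n m : ℕ} (σ : Equiv.Perm (Fin n)) (j : Fin m)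
    (i : Fin n) : (Fin n → Fin m → R) →ₗ[R] R where
  toFun y := ∑ k ∈ Iic i, y (σ k) j
  map_add' _ _ := Finset.sum_add_distrib
  map_smul' _ _ := (Finset.mul_sum _ _ _).symm

theorem F_concave_general (n m : ℕ)
    (v : Fin n → Fin m → ℝ) (hv : ∀ i j, 0 ≤ v i j)
    (σ : Fin m → Equiv.Perm (Fin n))
    (hσ : ∀ j, Antitone fun i => v (σ j i) j) :
    ConcaveOn ℝ Set.univ (F n m v σ) := by
  refine ConcaveOn.finset_sum convex_univ fun j _ => ConcaveOn.finset_sum convex_univ fun i _ => ?_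
  have hweight := (hσ j).sub_next_nonneg (fun k => hv (σ j k) j) i
  exact (concaveOn_one_sub_exp_neg.comp_linearMap (prefixSum (σ j) j i)).smul hweight

/-- Lemma 3.4: `F` is concave on `ℝ^{I×J}`. -/
theorem F_concave (n m : ℕ) (hn : 1 ≤ n) (hm : 1 ≤ m)
    (v : Fin n → Fin m → ℝ) (hv : ∀ i j, 0 ≤ v i j)
    (σ : Fin m → Equiv.Perm (Fin n))
    (hσ : ∀ j, Antitone fun i => v (σ j i) j) :
    ConcaveOn ℝ Set.univ (F n m v σ) :=
  F_concave_general n m v hv σ hσ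
end

section
/- Let v_1 ≥ v_2 ≥ … ≥ v_n ≥ 0 be real numbers with the convention v_{n+1} = 0, and let y_1, …, y_n ∈ [0,1] satisfy Σ_{k=1}^n y_k ≤ 1. Then Σ_{i=1}^n (v_i − v_{i+1})·(1 − exp(−Σ_{k=1}^i y_k)) ≥ (1 − 1/e)·Σ_{i=1}^n v_i y_i. (The per-item inequality in the proof of Lemma 3.3.) -/
/-!
Summation by parts rewrites `Σ_i v_i y_i` as `Σ_i (v_i - v_{i+1}) S_i` with `S_i = Σ_{k ≤ i} y_k`,
a combination of the partial sums with nonnegative weights. Each `S_i` lies in `[0, 1]`, where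
the concave function `1 - exp (-x)` lies above its chord `(1 - 1/e) x`; comparing termwise gives
the inequality.
-/

open Finset Real

theorem one_sub_exp_neg_one_mul_le {x : ℝ} (hx₀ : 0 ≤ x) (hx₁ : x ≤ 1) :
    (1 - exp (-1)) * x ≤ 1 - exp (-x) := by
  have hchord := convexOn_exp.2 (Set.mem_univ 0) (Set.mem_univ (-1)) (sub_nonneg.2 hx₁) hx₀
    (sub_add_cancel 1 x)
  simp only [smul_eq_mul, mul_zero, zero_add, mul_neg_one, exp_zero, mul_one] at hchord
  linarith

theorem sum_range_sub_mul_sum_range_succ {R : Type*} [CommRing R] (v y : ℕ → R) (n : ℕ) :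
    ∑ i ∈ range n, (v i - v (i + 1)) * ∑ k ∈ range (i + 1), y k =
      ∑ k ∈ range n, v k * y k - v n * ∑ k ∈ range n, y k := by
  induction n with
  | zero => simp
  | succ n ih =>
    rw [sum_range_succ, ih, sum_range_succ (fun k => v k * y k), sum_range_succ y]
    ring

theorem mul_sum_le_sum_sub_mul_one_sub_exp_neg {v y : ℕ → ℝ} {n : ℕ} (hv : Antitone v)
    (hvn : v n = 0) (hy : ∀ k, 0 ≤ y k) (hsum : ∑ k ∈ range n, y k ≤ 1) :
    (1 - exp (-1)) * ∑ k ∈ range n, v k * y k ≤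
      ∑ i ∈ range n, (v i - v (i + 1)) * (1 - exp (-∑ k ∈ range (i + 1), y k)) := by
  have hpartial_le : ∀ i ∈ range n, ∑ k ∈ range (i + 1), y k ≤ 1 := fun i hi =>
    (sum_le_sum_of_subset_of_nonneg (range_subset_range.2 (mem_range.1 hi))
      fun k _ _ => hy k).trans hsum
  calc (1 - exp (-1)) * ∑ k ∈ range n, v k * y k
      = ∑ i ∈ range n, (v i - v (i + 1)) * ((1 - exp (-1)) * ∑ k ∈ range (i + 1), y k) := by
        rw [← sub_zero (∑ k ∈ range n, v k * y k), ← zero_mul (∑ k ∈ range n, y k), ← hvn,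
          ← sum_range_sub_mul_sum_range_succ, mul_sum]
        exact sum_congr rfl fun i _ => by ring
    _ ≤ _ := sum_le_sum fun i hi => mul_le_mul_of_nonneg_left
        (one_sub_exp_neg_one_mul_le (sum_nonneg fun k _ => hy k) (hpartial_le i hi))
        (sub_nonneg.2 (hv i.le_succ))

/-- Extension by zero to `ℕ`; `natExtend v (i + 1)` is the `v_{i+1}` of the statement,
including the convention `v_{n+1} = 0`. -/
def natExtend {α : Type*} [Zero α] {n : ℕ} (v : Fin n → α) (i : ℕ) : α :=
  if h : i < n then v ⟨i, h⟩ else 0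

section

variable {α : Type*} [Zero α] {n : ℕ}

@[simp]
theorem natExtend_val (v : Fin n → α) (i : Fin n) : natExtend v i = v i :=
  dif_pos i.isLt

theorem natExtend_self (v : Fin n → α) : natExtend v n = 0 :=
  dif_neg (lt_irrefl n)

theorem natExtend_nonneg [Preorder α] {v : Fin n → α} (hv : ∀ i, 0 ≤ v i) (i : ℕ) :
    0 ≤ natExtend v i := by
  unfold natExtend
  split
  · exact hv _
  · exact le_rfl

theorem antitone_natExtend [Preorder α] {v : Fin n → α} (hv : ∀ i, 0 ≤ v i) (hmono : Antitone v) :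
    Antitone (natExtend v) := by
  refine antitone_nat_of_succ_le fun i => ?_
  by_cases hi : i + 1 < n
  · rw [natExtend, dif_pos hi, natExtend, dif_pos (Nat.lt_of_succ_lt hi)]
    exact hmono (Fin.mk_le_mk.2 i.le_succ)
  · rw [natExtend, dif_neg hi]
    exact natExtend_nonneg hv i

end

section

variable {α : Type*} [AddCommMonoid α] {n : ℕ}

theorem sum_range_natExtend (y : Fin n → α) :
    ∑ k ∈ range n, natExtend y k = ∑ k, y k := by
  rw [← Fin.sum_univ_eq_sum_range]
  simp only [natExtend_val]

theorem sum_range_succ_natExtend (y : Fin n → α) (i : Fin n) :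
    ∑ k ∈ range (i + 1), natExtend y k = ∑ k ∈ Iic i, y k := by
  rw [Nat.range_succ_eq_Iic, ← Fin.map_valEmbedding_Iic, sum_map]
  simp only [Fin.valEmbedding_apply, natExtend_val]

end

theorem per_item_inequality_general (n : ℕ)
    (v : Fin n → ℝ) (hv : ∀ i, 0 ≤ v i) (hmono : Antitone v)
    (y : Fin n → ℝ) (hy : ∀ k, y k ∈ Set.Icc (0 : ℝ) 1)
    (hsum : ∑ k, y k ≤ 1) :
    ∑ i : Fin n, (v i - if h : (i : ℕ) + 1 < n then v ⟨(i : ℕ) + 1, h⟩ else 0) *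
        (1 - Real.exp (-(∑ k ∈ Finset.Iic i, y k)))
      ≥ (1 - 1 / Real.exp 1) * ∑ i : Fin n, v i * y i := by
  have key := mul_sum_le_sum_sub_mul_one_sub_exp_neg (antitone_natExtend hv hmono)
    (natExtend_self v) (natExtend_nonneg fun k => (hy k).1)
    ((sum_range_natExtend y).trans_le hsum)
  rw [← Fin.sum_univ_eq_sum_range, ← Fin.sum_univ_eq_sum_range] at key
  simp only [natExtend_val, sum_range_succ_natExtend] at key
  rw [ge_iff_le, one_div, ← exp_neg]
  exact key

/-- The per-item inequality in the proof of Lemma 3.3: for non-increasing nonnegative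
values `v_1 ≥ … ≥ v_n ≥ 0` (with `v_{n+1} = 0`) and `y_k ∈ [0,1]` with `Σ y_k ≤ 1`,
`Σ_i (v_i − v_{i+1})(1 − exp(−Σ_{k≤i} y_k)) ≥ (1 − 1/e) Σ_i v_i y_i`. -/
theorem per_item_inequality (n : ℕ) (hn : 1 ≤ n)
    (v : Fin n → ℝ) (hv : ∀ i, 0 ≤ v i) (hmono : Antitone v)
    (y : Fin n → ℝ) (hy : ∀ k, y k ∈ Set.Icc (0 : ℝ) 1)
    (hsum : ∑ k, y k ≤ 1) :
    ∑ i : Fin n, (v i - if h : (i : ℕ) + 1 < n then v ⟨(i : ℕ) + 1, h⟩ else 0) *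
        (1 - Real.exp (-(∑ k ∈ Finset.Iic i, y k)))
      ≥ (1 - 1 / Real.exp 1) * ∑ i : Fin n, v i * y i :=
  per_item_inequality_general n v hv hmono y hy hsum
end

section
/- max_{y ∈ P} F(y) ≥ (1 − 1/e)·OPT, where OPT is the optimal value of the (integral) generalized assignment problem. (Lemma 3.3 of the paper.) -/
open Finset Function

section AddCommGroup

variable {M : Type*} [AddCommGroup M] {n : ℕ}

def seqDrop (u : Fin n → M) (i : Fin n) : M :=
  u i - if h : (i : ℕ) + 1 < n then u ⟨(i : ℕ) + 1, h⟩ else 0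

theorem sum_Ici_seqDrop (u : Fin n → M) (t : Fin n) :
    ∑ i ∈ Ici t, seqDrop u i = u t := by
  let g : ℕ → M := fun k => if h : k < n then u ⟨k, h⟩ else 0
  have hdrop : ∀ i : Fin n, seqDrop u i = g i - g (i + 1) := fun i => by simp [seqDrop, g]
  calc ∑ i ∈ Ici t, seqDrop u i = ∑ k ∈ Ico (t : ℕ) n, (g k - g (k + 1)) := by
        rw [← Fin.map_valEmbedding_Ici, sum_map]
        exact sum_congr rfl fun i _ => hdrop i
    _ = -(g n - g t) := by rw [← sum_Ico_sub g t.is_lt.le, ← sum_neg_distrib]; simp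
    _ = u t := by simp [g]

end AddCommGroup

section OrderedRing

variable {R : Type*} [CommRing R] [PartialOrder R] [IsOrderedRing R] {n : ℕ} {u : Fin n → R}

theorem seqDrop_nonneg (hu : ∀ i, 0 ≤ u i) (hanti : Antitone u) (i : Fin n) :
    0 ≤ seqDrop u i := by
  rw [seqDrop, sub_nonneg]
  split_ifs with h
  · exact hanti (Fin.le_def.2 (Nat.le_succ _))
  · exact hu i

theorem sum_seqDrop_mul_nonneg (hu : ∀ i, 0 ≤ u i) (hanti : Antitone u) {φ : Fin n → R}
    (hφ : ∀ i, 0 ≤ φ i) : 0 ≤ ∑ i, seqDrop u i * φ i :=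
  sum_nonneg fun i _ => mul_nonneg (seqDrop_nonneg hu hanti i) (hφ i)

theorem mul_le_sum_seqDrop_mul (hu : ∀ i, 0 ≤ u i) (hanti : Antitone u) {φ : Fin n → R}
    (hφ : ∀ i, 0 ≤ φ i) {c : R} {t : Fin n} (hc : ∀ i, t ≤ i → c ≤ φ i) :
    c * u t ≤ ∑ i, seqDrop u i * φ i :=
  calc c * u t = ∑ i ∈ Ici t, seqDrop u i * c := by rw [← sum_mul, sum_Ici_seqDrop, mul_comm]
    _ ≤ ∑ i ∈ Ici t, seqDrop u i * φ i :=
        sum_le_sum fun i hi => mul_le_mul_of_nonneg_left (hc i (mem_Ici.1 hi))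
          (seqDrop_nonneg hu hanti i)
    _ ≤ ∑ i, seqDrop u i * φ i :=
        sum_le_sum_of_subset_of_nonneg (subset_univ _) fun i _ _ =>
          mul_nonneg (seqDrop_nonneg hu hanti i) (hφ i)

end OrderedRing

theorem one_sub_exp_neg_nonneg {x : ℝ} (hx : 0 ≤ x) : 0 ≤ 1 - Real.exp (-x) :=
  sub_nonneg.2 (Real.exp_le_one_iff.2 (neg_nonpos.2 hx))

theorem one_sub_inv_exp_le_one_sub_exp_neg {x : ℝ} (hx : 1 ≤ x) :
    1 - 1 / Real.exp 1 ≤ 1 - Real.exp (-x) := by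
  rw [one_div, ← Real.exp_neg]
  gcongr

theorem F_eq_sum_seqDrop (n m : ℕ) (v : Fin n → Fin m → ℝ) (σ : Fin m → Equiv.Perm (Fin n))
    (y : Fin n → Fin m → ℝ) :
    F n m v σ y = ∑ j, ∑ i, seqDrop (fun i => v (σ j i) j) i *
      (1 - Real.exp (-(∑ k ∈ Iic i, y (σ j k) j))) :=
  rfl

theorem one_sub_inv_exp_mul_le_F_indicator {n m : ℕ} {v : Fin n → Fin m → ℝ}
    (hv : ∀ i j, 0 ≤ v i j) (σ : Fin m → Equiv.Perm (Fin n))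
    (hσ : ∀ j, Antitone fun i => v (σ j i) j) (S : Fin n → Finset (Fin m))
    (hS : Pairwise (Disjoint on S)) :
    (1 - 1 / Real.exp 1) * ∑ i, ∑ j ∈ S i, v i j ≤
      F n m v σ (fun i j => if j ∈ S i then 1 else 0) := by
  have hvalue : ∑ i, ∑ j ∈ S i, v i j = ∑ j, ∑ i, if j ∈ S i then v i j else 0 := by
    conv_rhs => rw [sum_comm]
    exact sum_congr rfl fun i _ => by rw [sum_ite_mem, univ_inter]
  rw [hvalue, F_eq_sum_seqDrop, mul_sum]
  refine sum_le_sum fun j _ => ?_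
  have hY : ∀ i, 0 ≤ ∑ k ∈ Iic i, if j ∈ S (σ j k) then (1 : ℝ) else 0 :=
    fun i => sum_nonneg fun k _ => by positivity
  by_cases hj : ∃ b, j ∈ S b
  · obtain ⟨b, hb⟩ := hj
    have hcover : ∀ i, (σ j).symm b ≤ i → 1 ≤ ∑ k ∈ Iic i, if j ∈ S (σ j k) then (1 : ℝ) else 0 :=
      fun i hi => by
        refine le_of_eq_of_le ?_ (single_le_sum (fun k _ => by positivity) (mem_Iic.2 hi))
        simp [hb]
    rw [sum_eq_single b (fun i _ hib => if_neg (disjoint_left.1 (hS hib.symm) hb)) (by simp),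
      if_pos hb]
    have := mul_le_sum_seqDrop_mul (u := fun i => v (σ j i) j) (fun i => hv _ _) (hσ j)
      (fun i => one_sub_exp_neg_nonneg (hY i))
      (fun i hi => one_sub_inv_exp_le_one_sub_exp_neg (hcover i hi))
    rwa [Equiv.apply_symm_apply] at this
  · push Not at hj
    rw [sum_eq_zero fun i _ => if_neg (hj i), mul_zero]
    exact sum_seqDrop_mul_nonneg (u := fun i => v (σ j i) j) (fun i => hv _ _) (hσ j)
      (fun i => one_sub_exp_neg_nonneg (hY i))

theorem max_F_ge_OPT_general (n m : ℕ)
    (v : Fin n → Fin m → ℝ) (hv : ∀ i j, 0 ≤ v i j)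
    (σ : Fin m → Equiv.Perm (Fin n))
    (hσ : ∀ j, Antitone fun i => v (σ j i) j)
    (w : Fin n → Fin m → ℝ)
    (C : Fin n → ℝ) (hC : ∀ i, 0 ≤ C i) :
    ∃ x : Fin n → Finset (Fin m) → ℝ,
      (∀ i S, 0 ≤ x i S) ∧
      (∀ i S, x i S ≠ 0 → ∑ j ∈ S, w i j ≤ C i) ∧
      (∀ i, ∑ S : Finset (Fin m), x i S ≤ 1) ∧
      ∀ S : Fin n → Finset (Fin m),
        (∀ i, ∑ j ∈ S i, w i j ≤ C i) →
        (∀ i i', i ≠ i' → Disjoint (S i) (S i')) →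
        F n m v σ (fun i j => ∑ T ∈ Finset.univ.filter (fun T : Finset (Fin m) => j ∈ T), x i T)
          ≥ (1 - 1 / Real.exp 1) * ∑ i : Fin n, ∑ j ∈ S i, v i j := by
  let feasible : Set (Fin n → Finset (Fin m)) :=
    {S | (∀ i, ∑ j ∈ S i, w i j ≤ C i) ∧ ∀ i i', i ≠ i' → Disjoint (S i) (S i')}
  have hempty : (fun _ => ∅) ∈ feasible := ⟨fun i => by simpa using hC i, fun _ _ _ => by simp⟩
  obtain ⟨Sopt, ⟨hcap, hdisj⟩, hopt⟩ :=
    feasible.exists_max_image (fun S => ∑ i, ∑ j ∈ S i, v i j) feasible.toFinite ⟨_, hempty⟩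
  refine ⟨fun i T => if T = Sopt i then 1 else 0, fun i T => by positivity,
    fun i T hT => ?_, fun i => by simp, fun S hcapS hdisjS => ?_⟩
  · obtain rfl : T = Sopt i := by_contra fun h => hT (if_neg h)
    exact hcap i
  have hy : (fun i j => ∑ T ∈ univ.filter (j ∈ ·), if T = Sopt i then (1 : ℝ) else 0) =
      fun i j => if j ∈ Sopt i then 1 else 0 := by
    ext i j
    simp [sum_ite_eq']
  rw [hy, ge_iff_le]
  calc (1 - 1 / Real.exp 1) * ∑ i, ∑ j ∈ S i, v i j
      ≤ (1 - 1 / Real.exp 1) * ∑ i, ∑ j ∈ Sopt i, v i j := by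
        refine mul_le_mul_of_nonneg_left (hopt S ⟨hcapS, hdisjS⟩) ?_
        rw [one_div, ← Real.exp_neg]
        exact one_sub_exp_neg_nonneg zero_le_one
    _ ≤ _ := one_sub_inv_exp_mul_le_F_indicator hv σ hσ Sopt fun i i' h => hdisj i i' h

/-- Lemma 3.3: `max_{y ∈ P} F(y) ≥ (1 − 1/e)·OPT`.  We exhibit `x ∈ R` (nonnegative,
supported on the feasible sets `F_i = {S : Σ_{j∈S} w_{ij} ≤ C_i}`, with
`Σ_S x_{i,S} ≤ 1` for each bin) such that `y = φ(x) ∈ P` satisfies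
`F(y) ≥ (1 − 1/e)·Σ_i Σ_{j ∈ S_i} v_{ij}` for every feasible allocation `(S_1,…,S_n)`. -/
theorem max_F_ge_OPT (n m : ℕ) (hn : 1 ≤ n) (hm : 1 ≤ m)
    (v : Fin n → Fin m → ℝ) (hv : ∀ i j, 0 ≤ v i j)
    (σ : Fin m → Equiv.Perm (Fin n))
    (hσ : ∀ j, Antitone fun i => v (σ j i) j)
    (w : Fin n → Fin m → ℝ) (hw : ∀ i j, 0 ≤ w i j)
    (C : Fin n → ℝ) (hC : ∀ i, 0 ≤ C i) :
    ∃ x : Fin n → Finset (Fin m) → ℝ,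
      (∀ i S, 0 ≤ x i S) ∧
      (∀ i S, x i S ≠ 0 → ∑ j ∈ S, w i j ≤ C i) ∧
      (∀ i, ∑ S : Finset (Fin m), x i S ≤ 1) ∧
      ∀ S : Fin n → Finset (Fin m),
        (∀ i, ∑ j ∈ S i, w i j ≤ C i) →
        (∀ i i', i ≠ i' → Disjoint (S i) (S i')) →
        F n m v σ (fun i j => ∑ T ∈ Finset.univ.filter (fun T : Finset (Fin m) => j ∈ T), x i T)
          ≥ (1 - 1 / Real.exp 1) * ∑ i : Fin n, ∑ j ∈ S i, v i j :=
  max_F_ge_OPT_general n m v hv σ hσ w C hC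
end

section
/- Suppose for each bin i we are given a nonnegative weight vector (x_{i,S})_{S∈F_i} with Σ_{S∈F_i} x_{i,S} ≤ 1, and a target y′ ∈ ℝ^{I×J} satisfying 0 ≤ y′_{ij} ≤ Σ_{S∈F_i : j∈S} x_{i,S} for all i ∈ I, j ∈ J. Then there exists a nonnegative vector (x′_{i,S})_{S∈F_i} with Σ_{S∈F_i} x′_{i,S} ≤ 1 for each bin i, such that Σ_{S∈F_i : j∈S} x′_{i,S} = y′_{ij} for all i ∈ I and j ∈ J. (The existential content of Lemma 3.1 of the paper.) -/
/-!
The bins are independent, so fix one bin with family `F`, and lower the coverage of the items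
to their targets one at a time. To lower the coverage of item `a` by the factor `t ∈ [0, 1]`,
every set `S ∋ a` keeps the fraction `t` of its weight and passes the rest to `S \ {a}`.
Downward closure keeps the new weights supported on `F`, and the move preserves both the total
mass and the coverage of every other item.
-/

open Finset

section SingleBin

variable {κ : Type*} [DecidableEq κ] {F : Finset (Finset κ)} {x : Finset κ → ℝ}

def cover (F : Finset (Finset κ)) (x : Finset κ → ℝ) (j : κ) : ℝ :=
  ∑ S ∈ F with j ∈ S, x S

def dropItem (a : κ) (t : ℝ) (x : Finset κ → ℝ) (S : Finset κ) : ℝ :=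
  if a ∈ S then t * x S else x S + (1 - t) * x (insert a S)

theorem sum_filter_insert_eq (hF : ∀ S ∈ F, ∀ T ⊆ S, T ∈ F) (hx : ∀ S, x S ≠ 0 → S ∈ F)
    {a : κ} {p : Finset κ → Prop} [DecidablePred p]
    (hp : ∀ S, a ∉ S → (p (insert a S) ↔ p S)) :
    ∑ S ∈ F with p S ∧ a ∉ S, x (insert a S) = ∑ S ∈ F with p S ∧ a ∈ S, x S := by
  refine sum_bij_ne_zero (fun S _ _ => insert a S) ?_ ?_ ?_ fun _ _ _ => rfl
  · intro S hS hne
    simp only [mem_filter] at hS ⊢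
    exact ⟨hx _ hne, (hp S hS.2.2).2 hS.2.1, mem_insert_self a S⟩
  · intro S₁ h₁ _ S₂ h₂ _ h
    simp only [mem_filter] at h₁ h₂
    rw [← erase_insert h₁.2.2, h, erase_insert h₂.2.2]
  · intro T hT _
    simp only [mem_filter] at hT
    have haT : a ∉ T.erase a := notMem_erase a T
    refine ⟨T.erase a, ?_, by rwa [insert_erase hT.2.2], insert_erase hT.2.2⟩
    simp only [mem_filter]
    exact ⟨hF T hT.1 _ (erase_subset a T), (hp _ haT).1 (by rw [insert_erase hT.2.2]; exact hT.2.1), haT⟩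

theorem dropItem_nonneg (hx0 : ∀ S, 0 ≤ x S) {a : κ} {t : ℝ} (ht0 : 0 ≤ t) (ht1 : t ≤ 1)
    (S : Finset κ) : 0 ≤ dropItem a t x S := by
  unfold dropItem
  split_ifs
  · exact mul_nonneg ht0 (hx0 S)
  · exact add_nonneg (hx0 S) (mul_nonneg (sub_nonneg.2 ht1) (hx0 _))

theorem mem_of_dropItem_ne_zero (hF : ∀ S ∈ F, ∀ T ⊆ S, T ∈ F) (hx : ∀ S, x S ≠ 0 → S ∈ F)
    {a : κ} {t : ℝ} {S : Finset κ} (h : dropItem a t x S ≠ 0) : S ∈ F := by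
  unfold dropItem at h
  split_ifs at h
  · exact hx S (right_ne_zero_of_mul h)
  · by_cases hS : x S = 0
    · have hins : x (insert a S) ≠ 0 := fun h' => h (by rw [hS, h', mul_zero, add_zero])
      exact hF _ (hx _ hins) S (subset_insert a S)
    · exact hx S hS

theorem sum_filter_dropItem (hF : ∀ S ∈ F, ∀ T ⊆ S, T ∈ F) (hx : ∀ S, x S ≠ 0 → S ∈ F)
    {a : κ} (t : ℝ) {p : Finset κ → Prop} [DecidablePred p]
    (hp : ∀ S, a ∉ S → (p (insert a S) ↔ p S)) :
    ∑ S ∈ F with p S, dropItem a t x S = ∑ S ∈ F with p S, x S := by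
  have hsplit (g : Finset κ → ℝ) : ∑ S ∈ F with p S, g S =
      ∑ S ∈ F with p S ∧ a ∈ S, g S + ∑ S ∈ F with p S ∧ a ∉ S, g S := by
    rw [← filter_filter, ← filter_filter, sum_filter_add_sum_filter_not]
  have hmem : ∑ S ∈ F with p S ∧ a ∈ S, dropItem a t x S =
      t * ∑ S ∈ F with p S ∧ a ∈ S, x S := by
    rw [mul_sum]
    exact sum_congr rfl fun S hS => if_pos (mem_filter.1 hS).2.2
  have hnotMem : ∑ S ∈ F with p S ∧ a ∉ S, dropItem a t x S =
      ∑ S ∈ F with p S ∧ a ∉ S, x S + (1 - t) * ∑ S ∈ F with p S ∧ a ∈ S, x S := by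
    rw [← sum_filter_insert_eq hF hx hp, mul_sum, ← sum_add_distrib]
    exact sum_congr rfl fun S hS => if_neg (mem_filter.1 hS).2.2
  rw [hsplit, hsplit x, hmem, hnotMem]
  ring

theorem sum_dropItem (hF : ∀ S ∈ F, ∀ T ⊆ S, T ∈ F) (hx : ∀ S, x S ≠ 0 → S ∈ F)
    (a : κ) (t : ℝ) : ∑ S ∈ F, dropItem a t x S = ∑ S ∈ F, x S := by
  simpa using sum_filter_dropItem hF hx (a := a) t (p := fun _ => True) fun _ _ => Iff.rfl

theorem cover_dropItem_of_ne (hF : ∀ S ∈ F, ∀ T ⊆ S, T ∈ F) (hx : ∀ S, x S ≠ 0 → S ∈ F)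
    {a j : κ} (t : ℝ) (hja : j ≠ a) : cover F (dropItem a t x) j = cover F x j :=
  sum_filter_dropItem hF hx t fun S _ => by simp [hja]

theorem cover_dropItem_self (a : κ) (t : ℝ) :
    cover F (dropItem a t x) a = t * cover F x a := by
  rw [cover, cover, mul_sum]
  exact sum_congr rfl fun S hS => if_pos (mem_filter.1 hS).2

theorem cover_eq_zero_of_notMem_biUnion {j : κ} (hj : j ∉ F.biUnion id) : cover F x j = 0 := by
  rw [cover, filter_false_of_mem (p := (j ∈ ·)) fun S hS hjS => hj (mem_biUnion.2 ⟨S, hS, hjS⟩), sum_empty]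

theorem exists_cover_eq_on (hF : ∀ S ∈ F, ∀ T ⊆ S, T ∈ F) (hx0 : ∀ S, 0 ≤ x S)
    (hx : ∀ S, x S ≠ 0 → S ∈ F) {y : κ → ℝ} (K : Finset κ) (hy0 : ∀ j ∈ K, 0 ≤ y j)
    (hy : ∀ j ∈ K, y j ≤ cover F x j) :
    ∃ x' : Finset κ → ℝ, (∀ S, 0 ≤ x' S) ∧ (∀ S, x' S ≠ 0 → S ∈ F) ∧
      ∑ S ∈ F, x' S = ∑ S ∈ F, x S ∧ (∀ j ∈ K, cover F x' j = y j) ∧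
      ∀ j ∉ K, cover F x' j = cover F x j := by
  induction K using Finset.induction_on with
  | empty => exact ⟨x, hx0, hx, rfl, by simp, fun _ _ => rfl⟩
  | insert a K haK ih =>
    obtain ⟨x₁, hx₁0, hx₁, hsum, hK, hout⟩ :=
      ih (fun j hj => hy0 j (mem_insert_of_mem hj)) (fun j hj => hy j (mem_insert_of_mem hj))
    set c := cover F x₁ a
    have hya : 0 ≤ y a := hy0 a (mem_insert_self a K)
    have hyc : y a ≤ c := (hy a (mem_insert_self a K)).trans (hout a haK).ge
    have hc : 0 ≤ c := hya.trans hyc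
    -- when `c = 0` the junk value `y a / 0 = 0` still works, since then `y a = 0`
    have htc : y a / c * c = y a := by
      rcases hc.eq_or_lt with hc0 | hc0
      · rw [← hc0, mul_zero]
        exact (le_antisymm (hc0 ▸ hyc) hya).symm
      · exact div_mul_cancel₀ _ hc0.ne'
    refine ⟨dropItem a (y a / c) x₁,
      dropItem_nonneg hx₁0 (div_nonneg hya hc) (div_le_one_of_le₀ hyc hc),
      fun S => mem_of_dropItem_ne_zero hF hx₁, (sum_dropItem hF hx₁ _ _).trans hsum, ?_, ?_⟩
    · intro j hj
      rcases eq_or_ne j a with rfl | hja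
      · rw [cover_dropItem_self, htc]
      · rw [cover_dropItem_of_ne hF hx₁ _ hja]
        exact hK j ((mem_insert.1 hj).resolve_left hja)
    · intro j hj
      simp only [mem_insert, not_or] at hj
      rw [cover_dropItem_of_ne hF hx₁ _ hj.1]
      exact hout j hj.2

theorem exists_cover_eq (hF : ∀ S ∈ F, ∀ T ⊆ S, T ∈ F) (hx0 : ∀ S, 0 ≤ x S)
    (hx : ∀ S, x S ≠ 0 → S ∈ F) {y : κ → ℝ} (hy0 : ∀ j, 0 ≤ y j)
    (hy : ∀ j, y j ≤ cover F x j) :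
    ∃ x' : Finset κ → ℝ, (∀ S, 0 ≤ x' S) ∧ (∀ S, x' S ≠ 0 → S ∈ F) ∧
      ∑ S ∈ F, x' S = ∑ S ∈ F, x S ∧ ∀ j, cover F x' j = y j := by
  obtain ⟨x', hx'0, hx', hsum, hcover, -⟩ :=
    exists_cover_eq_on hF hx0 hx (F.biUnion id) (fun j _ => hy0 j) (fun j _ => hy j)
  refine ⟨x', hx'0, hx', hsum, fun j => ?_⟩
  by_cases hj : j ∈ F.biUnion id
  · exact hcover j hj
  · have hyj : y j ≤ 0 := cover_eq_zero_of_notMem_biUnion (x := x) hj ▸ hy j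
    rw [cover_eq_zero_of_notMem_biUnion hj, le_antisymm hyj (hy0 j)]

end SingleBin

theorem exists_dominated_point_general {ι κ : Type*} [DecidableEq κ]
    (Fam : ι → Finset (Finset κ))
    (hdc : ∀ i, ∀ S ∈ Fam i, ∀ T ⊆ S, T ∈ Fam i)
    (x : ι → Finset κ → ℝ)
    (hx0 : ∀ i S, 0 ≤ x i S)
    (hxsupp : ∀ i S, x i S ≠ 0 → S ∈ Fam i)
    (hxsum : ∀ i, ∑ S ∈ Fam i, x i S ≤ 1)
    (y' : ι → κ → ℝ)
    (hy'0 : ∀ i j, 0 ≤ y' i j)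
    (hy'le : ∀ i j, y' i j ≤ ∑ S ∈ (Fam i).filter (fun S => j ∈ S), x i S) :
    ∃ x' : ι → Finset κ → ℝ,
      (∀ i S, 0 ≤ x' i S) ∧
      (∀ i S, x' i S ≠ 0 → S ∈ Fam i) ∧
      (∀ i, ∑ S ∈ Fam i, x' i S ≤ 1) ∧
      (∀ i j, ∑ S ∈ (Fam i).filter (fun S => j ∈ S), x' i S = y' i j) := by
  choose x' hx'0 hx'supp hx'sum hx'cover using fun i =>
    exists_cover_eq (hdc i) (hx0 i) (hxsupp i) (hy'0 i) (hy'le i)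
  exact ⟨x', hx'0, hx'supp, fun i => (hx'sum i).trans_le (hxsum i), hx'cover⟩

/-- The existential content of Lemma 3.1: given nonnegative weights `x_{i,S}` supported
on a downward-closed family `F_i` with `Σ_{S∈F_i} x_{i,S} ≤ 1`, and a target
`0 ≤ y′_{ij} ≤ Σ_{S∈F_i : j∈S} x_{i,S}`, there is a nonnegative `x′` supported on the
families with `Σ_{S∈F_i} x′_{i,S} ≤ 1` and `Σ_{S∈F_i : j∈S} x′_{i,S} = y′_{ij}`. -/
theorem exists_dominated_point {ι κ : Type*} [Fintype ι] [Fintype κ] [DecidableEq κ]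
    (Fam : ι → Finset (Finset κ))
    (hdc : ∀ i, ∀ S ∈ Fam i, ∀ T ⊆ S, T ∈ Fam i)
    (x : ι → Finset κ → ℝ)
    (hx0 : ∀ i S, 0 ≤ x i S)
    (hxsupp : ∀ i S, x i S ≠ 0 → S ∈ Fam i)
    (hxsum : ∀ i, ∑ S ∈ Fam i, x i S ≤ 1)
    (y' : ι → κ → ℝ)
    (hy'0 : ∀ i j, 0 ≤ y' i j)
    (hy'le : ∀ i j, y' i j ≤ ∑ S ∈ (Fam i).filter (fun S => j ∈ S), x i S) :
    ∃ x' : ι → Finset κ → ℝ,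
      (∀ i S, 0 ≤ x' i S) ∧
      (∀ i S, x' i S ≠ 0 → S ∈ Fam i) ∧
      (∀ i, ∑ S ∈ Fam i, x' i S ≤ 1) ∧
      (∀ i j, ∑ S ∈ (Fam i).filter (fun S => j ∈ S), x' i S = y' i j) :=
  exists_dominated_point_general Fam hdc x hx0 hxsupp hxsum y' hy'0 hy'le
end

section
/- Let 0 ≤ δ ≤ 1/n and let y, y′ ∈ ℝ^{I×J} with y ≥ 0 componentwise and ‖y − y′‖_∞ ≤ δ. Then (y′ − y)·∇F(y′) ≥ (y′ − y)·∇F(y) − 3δ n² m M, where M = max_{i∈I, j∈J} v_{ij}. (Lemma 3.9 of the paper.) -/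
/-- The gradient of `F`: its coordinate at bin `a = σ_j(i)` and item `j` is
`Σ_{l=i}^n (v_{σ_j(l),j} − v_{σ_j(l+1),j})·exp(−Σ_{k=1}^l y_{σ_j(k),j})`. -/
noncomputable def gradF (n m : ℕ) (v : Fin n → Fin m → ℝ) (σ : Fin m → Equiv.Perm (Fin n))
    (y : Fin n → Fin m → ℝ) (a : Fin n) (j : Fin m) : ℝ :=
  ∑ l ∈ Finset.Ici ((σ j).symm a),
    (v (σ j l) j - if h : (l : ℕ) + 1 < n then v (σ j ⟨(l : ℕ) + 1, h⟩) j else 0) *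
    Real.exp (-(∑ k ∈ Finset.Iic l, y (σ j k) j))

/-!
Each coordinate of `∇F` is a sum of at most `n` terms `w · exp (-S)`, where the weights `w` are
differences of two values in `[0, M]`, hence `|w| ≤ M`, and `S` is a partial sum of at most `n`
coordinates of `y`. Moving `y` by `δ` in sup norm moves every `S` by at most `nδ ≤ 1`; since `S ≥ 0`
for `y ≥ 0`, both exponents stay in `(-∞, 1]`, where `exp` is `e`-Lipschitz. Hence each coordinate
of `∇F` moves by at most `n · M · e · nδ ≤ 3nM`, and pairing with `y' - y` and summing over the `nm`
coordinates gives the loss `3δn²mM`.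
-/

open Finset Real

lemma abs_exp_sub_exp_le_of_le {x y c : ℝ} (hx : x ≤ c) (hy : y ≤ c) :
    |exp x - exp y| ≤ exp c * |x - y| := by
  wlog hyx : y ≤ x generalizing x y
  · rw [abs_sub_comm, abs_sub_comm x]
    exact this hy hx (le_of_not_ge hyx)
  have hfactor : exp x - exp y = exp x * (1 - exp (y - x)) := by
    rw [mul_sub, mul_one, ← exp_add]
    ring_nf
  have hle : 1 - exp (y - x) ≤ x - y := by linarith [add_one_le_exp (y - x)]
  have hnonneg : 0 ≤ 1 - exp (y - x) := by linarith [exp_le_one_iff.2 (sub_nonpos.2 hyx)]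
  rw [abs_of_nonneg (sub_nonneg.2 (exp_le_exp.2 hyx)), abs_of_nonneg (sub_nonneg.2 hyx), hfactor]
  exact mul_le_mul (exp_le_exp.2 hx) hle hnonneg (exp_pos c).le

lemma Finset.abs_sum_sub_sum_le_card_nsmul {ι G : Type*} [AddCommGroup G] [LinearOrder G]
    [IsOrderedAddMonoid G] {s : Finset ι} {f g : ι → G} {C : G}
    (h : ∀ i ∈ s, |f i - g i| ≤ C) : |∑ i ∈ s, f i - ∑ i ∈ s, g i| ≤ #s • C := by
  rw [← sum_sub_distrib]
  exact (abs_sum_le_sum_abs _ _).trans (sum_le_card_nsmul _ _ _ h)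

lemma Fin.natCast_card_finset_le {n : ℕ} (s : Finset (Fin n)) : (#s : ℝ) ≤ n := by
  exact_mod_cast (card_le_univ s).trans_eq (Fintype.card_fin n)

section

variable {n m : ℕ} {v : Fin n → Fin m → ℝ} {σ : Fin m → Equiv.Perm (Fin n)} {M δ : ℝ}
  {y y' : Fin n → Fin m → ℝ}

noncomputable def partialSum (σ : Fin m → Equiv.Perm (Fin n)) (y : Fin n → Fin m → ℝ)
    (j : Fin m) (l : Fin n) : ℝ :=
  ∑ k ∈ Iic l, y (σ j k) j

/-- `v_{σ_j(l),j} − v_{σ_j(l+1),j}`, with the convention `v_{σ_j(n+1),j} = 0`. -/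
noncomputable def valueGap (v : Fin n → Fin m → ℝ) (σ : Fin m → Equiv.Perm (Fin n))
    (j : Fin m) (l : Fin n) : ℝ :=
  v (σ j l) j - if h : (l : ℕ) + 1 < n then v (σ j ⟨(l : ℕ) + 1, h⟩) j else 0

lemma gradF_eq_sum (y : Fin n → Fin m → ℝ) (a : Fin n) (j : Fin m) :
    gradF n m v σ y a j =
      ∑ l ∈ Ici ((σ j).symm a), valueGap v σ j l * exp (-partialSum σ y j l) :=
  rfl

lemma partialSum_nonneg (hy : ∀ i j, 0 ≤ y i j) (j : Fin m) (l : Fin n) :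
    0 ≤ partialSum σ y j l :=
  sum_nonneg fun _ _ => hy _ _

lemma abs_partialSum_sub_le (hyy' : ∀ i j, |y i j - y' i j| ≤ δ) (j : Fin m) (l : Fin n) :
    |partialSum σ y j l - partialSum σ y' j l| ≤ n * δ := by
  have hδ : 0 ≤ δ := (abs_nonneg _).trans (hyy' (σ j l) j)
  calc |partialSum σ y j l - partialSum σ y' j l| ≤ #(Iic l) • δ :=
        abs_sum_sub_sum_le_card_nsmul fun k _ => hyy' _ _
    _ ≤ n * δ := by
        rw [nsmul_eq_mul]
        exact mul_le_mul_of_nonneg_right (Fin.natCast_card_finset_le _) hδ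

lemma abs_valueGap_le (hv : ∀ i j, 0 ≤ v i j) (hvM : ∀ i j, v i j ≤ M) (j : Fin m) (l : Fin n) :
    |valueGap v σ j l| ≤ M := by
  unfold valueGap
  split_ifs
  · exact abs_sub_le_of_nonneg_of_le (hv _ _) (hvM _ _) (hv _ _) (hvM _ _)
  · rw [sub_zero, abs_of_nonneg (hv _ _)]
    exact hvM _ _

lemma abs_exp_neg_partialSum_sub_le (hy : ∀ i j, 0 ≤ y i j)
    (hyy' : ∀ i j, |y i j - y' i j| ≤ δ) (hnδ : n * δ ≤ 1) (j : Fin m) (l : Fin n) :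
    |exp (-partialSum σ y j l) - exp (-partialSum σ y' j l)| ≤ exp 1 * (n * δ) := by
  have hS := partialSum_nonneg (σ := σ) hy j l
  have hS' := abs_partialSum_sub_le (σ := σ) hyy' j l
  have hS'_lower := (abs_sub_le_iff.1 hS').1
  calc |exp (-partialSum σ y j l) - exp (-partialSum σ y' j l)|
      ≤ exp 1 * |-partialSum σ y j l - -partialSum σ y' j l| :=
        abs_exp_sub_exp_le_of_le (by linarith) (by linarith)
    _ = exp 1 * |partialSum σ y j l - partialSum σ y' j l| := by rw [neg_sub_neg, abs_sub_comm]
    _ ≤ exp 1 * (n * δ) := by gcongr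

lemma abs_gradF_sub_le (hv : ∀ i j, 0 ≤ v i j) (hvM : ∀ i j, v i j ≤ M)
    (hy : ∀ i j, 0 ≤ y i j) (hyy' : ∀ i j, |y i j - y' i j| ≤ δ) (hnδ : n * δ ≤ 1)
    (a : Fin n) (j : Fin m) :
    |gradF n m v σ y a j - gradF n m v σ y' a j| ≤ n * (M * (exp 1 * (n * δ))) := by
  have hM : 0 ≤ M := (hv a j).trans (hvM a j)
  have hδ : 0 ≤ δ := (abs_nonneg _).trans (hyy' a j)
  rw [gradF_eq_sum, gradF_eq_sum]
  calc _ ≤ #(Ici ((σ j).symm a)) • (M * (exp 1 * (n * δ))) := by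
        refine abs_sum_sub_sum_le_card_nsmul fun l _ => ?_
        rw [← mul_sub, abs_mul]
        exact mul_le_mul (abs_valueGap_le hv hvM j l)
          (abs_exp_neg_partialSum_sub_le hy hyy' hnδ j l) (abs_nonneg _) hM
    _ ≤ n * (M * (exp 1 * (n * δ))) := by
        rw [nsmul_eq_mul]
        exact mul_le_mul_of_nonneg_right (Fin.natCast_card_finset_le _) (by positivity)

lemma mul_gradF_sub_le (hv : ∀ i j, 0 ≤ v i j) (hvM : ∀ i j, v i j ≤ M)
    (hy : ∀ i j, 0 ≤ y i j) (hyy' : ∀ i j, |y i j - y' i j| ≤ δ) (hnδ : n * δ ≤ 1)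
    (a : Fin n) (j : Fin m) :
    (y' a j - y a j) * (gradF n m v σ y a j - gradF n m v σ y' a j) ≤ 3 * δ * n * M := by
  have hM : 0 ≤ M := (hv a j).trans (hvM a j)
  have hδ : 0 ≤ δ := (abs_nonneg _).trans (hyy' a j)
  have he : exp 1 * (n * δ) ≤ 3 := by
    calc exp 1 * (n * δ) ≤ 3 * 1 :=
          mul_le_mul (by linarith [exp_one_lt_d9]) hnδ (by positivity) zero_le_three
      _ = 3 := mul_one 3
  calc (y' a j - y a j) * (gradF n m v σ y a j - gradF n m v σ y' a j)
      ≤ |y' a j - y a j| * |gradF n m v σ y a j - gradF n m v σ y' a j| :=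
        (le_abs_self _).trans (abs_mul _ _).le
    _ ≤ δ * (n * (M * 3)) := by
        rw [abs_sub_comm]
        refine mul_le_mul (hyy' a j) ((abs_gradF_sub_le hv hvM hy hyy' hnδ a j).trans ?_)
          (abs_nonneg _) hδ
        gcongr
    _ = 3 * δ * n * M := by ring

end

theorem dot_gradF_neighbor_general (n m : ℕ)
    (v : Fin n → Fin m → ℝ) (hv : ∀ i j, 0 ≤ v i j)
    (σ : Fin m → Equiv.Perm (Fin n))
    (M : ℝ) (hM : IsGreatest {t : ℝ | ∃ i j, t = v i j} M)
    (δ : ℝ) (hδ1 : δ ≤ 1 / n)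
    (y y' : Fin n → Fin m → ℝ) (hy : ∀ i j, 0 ≤ y i j)
    (hyy' : ∀ i j, |y i j - y' i j| ≤ δ) :
    ∑ i : Fin n, ∑ j : Fin m, (y' i j - y i j) * gradF n m v σ y' i j
      ≥ (∑ i : Fin n, ∑ j : Fin m, (y' i j - y i j) * gradF n m v σ y i j)
        - 3 * δ * n ^ 2 * m * M := by
  have hvM : ∀ i j, v i j ≤ M := fun i j => hM.2 ⟨i, j, rfl⟩
  have hnδ : n * δ ≤ 1 := calc
    n * δ ≤ n * (1 / n) := mul_le_mul_of_nonneg_left hδ1 n.cast_nonneg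
    _ ≤ 1 := by rw [mul_one_div]; exact div_self_le_one _
  have hsum : ∑ i : Fin n, ∑ j : Fin m,
      ((y' i j - y i j) * gradF n m v σ y i j - (y' i j - y i j) * gradF n m v σ y' i j)
        ≤ ∑ _i : Fin n, ∑ _j : Fin m, 3 * δ * n * M :=
    sum_le_sum fun i _ => sum_le_sum fun j _ => by
      rw [← mul_sub]
      exact mul_gradF_sub_le hv hvM hy hyy' hnδ i j
  simp only [sum_sub_distrib, sum_const, card_univ, Fintype.card_fin, nsmul_eq_mul] at hsum
  linarith [show (n : ℝ) * (m * (3 * δ * n * M)) = 3 * δ * n ^ 2 * m * M by ring]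

/-- Lemma 3.9: for `0 ≤ δ ≤ 1/n`, `y ≥ 0`, and `‖y − y′‖_∞ ≤ δ`,
`(y′ − y)·∇F(y′) ≥ (y′ − y)·∇F(y) − 3δn²mM` where `M = max_{i,j} v_{ij}`. -/
theorem dot_gradF_neighbor (n m : ℕ) (hn : 1 ≤ n) (hm : 1 ≤ m)
    (v : Fin n → Fin m → ℝ) (hv : ∀ i j, 0 ≤ v i j)
    (σ : Fin m → Equiv.Perm (Fin n))
    (hσ : ∀ j, Antitone fun i => v (σ j i) j)
    (M : ℝ) (hM : IsGreatest {t : ℝ | ∃ i j, t = v i j} M)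
    (δ : ℝ) (hδ0 : 0 ≤ δ) (hδ1 : δ ≤ 1 / n)
    (y y' : Fin n → Fin m → ℝ) (hy : ∀ i j, 0 ≤ y i j)
    (hyy' : ∀ i j, |y i j - y' i j| ≤ δ) :
    ∑ i : Fin n, ∑ j : Fin m, (y' i j - y i j) * gradF n m v σ y' i j
      ≥ (∑ i : Fin n, ∑ j : Fin m, (y' i j - y i j) * gradF n m v σ y i j)
        - 3 * δ * n ^ 2 * m * M :=
  dot_gradF_neighbor_general n m v hv σ M hM δ hδ1 y y' hy hyy'
end

section
/- Let 0 ≤ δ ≤ 1/n, let y ∈ ℝ^{I×J} with y ≥ 0 componentwise, and let z, w ∈ [0,1]^{I×J}. Then F(y + δ(z − w)) ≥ F(y) + δ·((z − w)·∇F(y)) − 3δ² n² m M, where M = max_{i∈I, j∈J} v_{ij}. (The second case in the proof of Lemma 3.10.) -/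
/-!
For each item `j`, `F` is `∑ᵢ cᵢ (1 - exp (-Sᵢ))`, where `Sᵢ` is the prefix sum of `y` along `σ_j`
and the weights `cᵢ ≥ 0` are the successive drops of the sorted values, so `∑ᵢ cᵢ ≤ M`. The step
moves every `Sᵢ` by some `tᵢ` with `|tᵢ| ≤ δn ≤ 1`. Since `exp (-t) ≤ 1 - t + t²` for `|t| ≤ 1`
and `exp (-Sᵢ) ≤ 1`, each term loses at most `cᵢ tᵢ²` against its linearization, and by Abel
summation the linear terms add up to `δ (z - w) · ∇F(y)`. The error is at most `δ²n²M` per item.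
-/

open Finset Real

theorem le_one_sub_exp_neg_add {S t : ℝ} (hS : 0 ≤ S) (ht : |t| ≤ 1) :
    1 - exp (-S) + exp (-S) * t - t ^ 2 ≤ 1 - exp (-(S + t)) := by
  have hquad : exp (-t) - 1 + t ≤ t ^ 2 := by
    have := (abs_le.mp (abs_exp_sub_one_sub_id_le (x := -t) (by rwa [abs_neg]))).2
    linarith [neg_sq t]
  have hexp : exp (-S) ≤ 1 := exp_le_one_iff.mpr (by linarith)
  have : exp (-S) * (exp (-t) - 1 + t) ≤ t ^ 2 := by
    nlinarith [exp_pos (-S), sq_nonneg t]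
  rw [neg_add, exp_add]
  linarith

theorem sum_mul_sum_Ici {ι R : Type*} [Fintype ι] [Preorder ι] [LocallyFiniteOrderTop ι]
    [LocallyFiniteOrderBot ι] [CommSemiring R] (f g : ι → R) :
    ∑ i, f i * ∑ l ∈ Ici i, g l = ∑ l, (∑ i ∈ Iic l, f i) * g l := by
  simp only [mul_sum, sum_mul]
  exact sum_comm' fun i l => by simp

def stepDrop {n : ℕ} (f : Fin n → ℝ) (i : Fin n) : ℝ :=
  f i - if h : (i : ℕ) + 1 < n then f ⟨(i : ℕ) + 1, h⟩ else 0

theorem stepDrop_nonneg {n : ℕ} {f : Fin n → ℝ} (hf : Antitone f) (hf0 : ∀ i, 0 ≤ f i)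
    (i : Fin n) : 0 ≤ stepDrop f i := by
  unfold stepDrop
  split_ifs with h
  · exact sub_nonneg.mpr (hf (Fin.le_def.mpr (Nat.le_succ _)))
  · simpa using hf0 i

theorem sum_stepDrop {n : ℕ} (f : Fin n → ℝ) (hn : 0 < n) :
    ∑ i, stepDrop f i = f ⟨0, hn⟩ := by
  let g : ℕ → ℝ := fun k => if h : k < n then f ⟨k, h⟩ else 0
  calc ∑ i, stepDrop f i = ∑ i : Fin n, (g i - g (i + 1)) := by
        simp [stepDrop, g]
    _ = g 0 - g n := by
        rw [Fin.sum_univ_eq_sum_range (fun k => g k - g (k + 1)), sum_range_sub']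
    _ = f ⟨0, hn⟩ := by simp [g, hn]

section PrefixCoverage

variable {ι : Type*} [Fintype ι] [Preorder ι] [LocallyFiniteOrderBot ι]

noncomputable def prefixCoverage (c x : ι → ℝ) : ℝ :=
  ∑ i, c i * (1 - exp (-∑ k ∈ Iic i, x k))

noncomputable def prefixCoverageGrad [LocallyFiniteOrderTop ι] (c x : ι → ℝ) (i : ι) : ℝ :=
  ∑ l ∈ Ici i, c l * exp (-∑ k ∈ Iic l, x k)

theorem le_prefixCoverage_add [LocallyFiniteOrderTop ι] {c x d : ι → ℝ} (hc : ∀ i, 0 ≤ c i)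
    (hx : ∀ i, 0 ≤ x i) (hd : ∀ i, |∑ k ∈ Iic i, d k| ≤ 1) :
    prefixCoverage c x + ∑ i, d i * prefixCoverageGrad c x i
        - ∑ i, c i * (∑ k ∈ Iic i, d k) ^ 2 ≤ prefixCoverage c fun i => x i + d i := by
  simp only [prefixCoverageGrad, prefixCoverage]
  rw [sum_mul_sum_Ici, ← sum_add_distrib, ← sum_sub_distrib]
  refine sum_le_sum fun i _ => ?_
  have := mul_le_mul_of_nonneg_left
    (le_one_sub_exp_neg_add (sum_nonneg fun k _ => hx k : 0 ≤ ∑ k ∈ Iic i, x k) (hd i)) (hc i)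
  rw [sum_add_distrib]
  linarith

theorem le_prefixCoverage_add_mul [LocallyFiniteOrderTop ι] {c x e : ι → ℝ} {δ M : ℝ}
    (hc : ∀ i, 0 ≤ c i) (hcM : ∑ i, c i ≤ M) (hx : ∀ i, 0 ≤ x i) (he : ∀ i, |e i| ≤ 1)
    (hδ0 : 0 ≤ δ) (hδ : δ * Fintype.card ι ≤ 1) :
    prefixCoverage c x + δ * ∑ i, e i * prefixCoverageGrad c x i
        - δ ^ 2 * Fintype.card ι ^ 2 * M ≤ prefixCoverage c fun i => x i + δ * e i := by
  have hsum : ∀ i, |∑ k ∈ Iic i, δ * e k| ≤ δ * Fintype.card ι := fun i =>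
    calc |∑ k ∈ Iic i, δ * e k| = δ * |∑ k ∈ Iic i, e k| := by
          rw [← mul_sum, abs_mul, abs_of_nonneg hδ0]
      _ ≤ δ * ((Iic i).card • 1) := by
          gcongr
          exact (abs_sum_le_sum_abs _ _).trans (sum_le_card_nsmul _ _ _ fun k _ => he k)
      _ ≤ δ * Fintype.card ι := by
          gcongr
          simpa using card_le_univ (Iic i)
  have hsq : ∑ i, c i * (∑ k ∈ Iic i, δ * e k) ^ 2 ≤ δ ^ 2 * Fintype.card ι ^ 2 * M :=
    calc ∑ i, c i * (∑ k ∈ Iic i, δ * e k) ^ 2 ≤ ∑ i, c i * (δ * Fintype.card ι) ^ 2 := by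
          refine sum_le_sum fun i _ => mul_le_mul_of_nonneg_left ?_ (hc i)
          exact sq_le_sq' (abs_le.mp (hsum i)).1 (abs_le.mp (hsum i)).2
      _ ≤ δ ^ 2 * Fintype.card ι ^ 2 * M := by
          rw [← sum_mul, mul_pow, mul_comm]
          gcongr
  have key := le_prefixCoverage_add (d := fun k => δ * e k) hc hx fun i => (hsum i).trans hδ
  simp only [mul_assoc] at key
  rw [mul_sum]
  linarith

end PrefixCoverage

theorem F_swap_step_increase_general (n m : ℕ)
    (v : Fin n → Fin m → ℝ) (hv : ∀ i j, 0 ≤ v i j)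
    (σ : Fin m → Equiv.Perm (Fin n))
    (hσ : ∀ j, Antitone fun i => v (σ j i) j)
    (M : ℝ) (hM : IsGreatest {t : ℝ | ∃ i j, t = v i j} M)
    (δ : ℝ) (hδ0 : 0 ≤ δ) (hδ1 : δ ≤ 1 / n)
    (y : Fin n → Fin m → ℝ) (hy : ∀ i j, 0 ≤ y i j)
    (z w : Fin n → Fin m → ℝ)
    (hz : ∀ i j, z i j ∈ Set.Icc (0 : ℝ) 1) (hw : ∀ i j, w i j ∈ Set.Icc (0 : ℝ) 1) :
    F n m v σ (fun i j => y i j + δ * (z i j - w i j))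
      ≥ F n m v σ y
        + δ * ∑ i : Fin n, ∑ j : Fin m, (z i j - w i j) * gradF n m v σ y i j
        - 3 * δ ^ 2 * n ^ 2 * m * M := by
  obtain ⟨⟨i₀, j₀, hM₀⟩, hvM⟩ := hM
  have hn : 0 < n := i₀.pos
  have hδn : δ * n ≤ 1 := by rwa [le_div_iff₀ (by exact_mod_cast hn)] at hδ1
  set c : Fin m → Fin n → ℝ := fun j => stepDrop fun i => v (σ j i) j
  have hF : ∀ y, F n m v σ y = ∑ j, prefixCoverage (c j) fun i => y (σ j i) j := fun _ => rfl
  have hgrad : ∑ i, ∑ j, (z i j - w i j) * gradF n m v σ y i j = ∑ j, ∑ i,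
      (z (σ j i) j - w (σ j i) j) * prefixCoverageGrad (c j) (fun i => y (σ j i) j) i := by
    rw [sum_comm]
    refine sum_congr rfl fun j _ => ?_
    rw [← Equiv.sum_comp (σ j)]
    simp [gradF, prefixCoverageGrad, c, stepDrop]
  have hitem (j : Fin m) := le_prefixCoverage_add_mul (δ := δ)
    (stepDrop_nonneg (hσ j) fun i => hv _ _) ((sum_stepDrop _ hn).le.trans (hvM ⟨_, _, rfl⟩))
    (fun i => hy (σ j i) j) (fun i => Real.dist_le_of_mem_Icc_01 (hz (σ j i) j) (hw (σ j i) j))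
    hδ0 (by simpa using hδn)
  rw [hF, hF, hgrad, mul_sum, ge_iff_le]
  refine le_trans ?_ (sum_le_sum fun j _ => hitem j)
  rw [sum_sub_distrib, sum_add_distrib, sum_const, card_univ, Fintype.card_fin, nsmul_eq_mul,
    Fintype.card_fin]
  have hM0 : 0 ≤ M := hM₀ ▸ hv i₀ j₀
  linarith [mul_nonneg (mul_nonneg (sq_nonneg δ) (sq_nonneg (n : ℝ))) (mul_nonneg m.cast_nonneg hM0)]

/-- The second case in the proof of Lemma 3.10: for `0 ≤ δ ≤ 1/n`, `y ≥ 0`, and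
`z, w ∈ [0,1]^{I×J}`,
`F(y + δ(z − w)) ≥ F(y) + δ·((z − w)·∇F(y)) − 3δ²n²mM` where `M = max_{i,j} v_{ij}`. -/
theorem F_swap_step_increase (n m : ℕ) (hn : 1 ≤ n) (hm : 1 ≤ m)
    (v : Fin n → Fin m → ℝ) (hv : ∀ i j, 0 ≤ v i j)
    (σ : Fin m → Equiv.Perm (Fin n))
    (hσ : ∀ j, Antitone fun i => v (σ j i) j)
    (M : ℝ) (hM : IsGreatest {t : ℝ | ∃ i j, t = v i j} M)
    (δ : ℝ) (hδ0 : 0 ≤ δ) (hδ1 : δ ≤ 1 / n)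
    (y : Fin n → Fin m → ℝ) (hy : ∀ i j, 0 ≤ y i j)
    (z w : Fin n → Fin m → ℝ)
    (hz : ∀ i j, z i j ∈ Set.Icc (0 : ℝ) 1) (hw : ∀ i j, w i j ∈ Set.Icc (0 : ℝ) 1) :
    F n m v σ (fun i j => y i j + δ * (z i j - w i j))
      ≥ F n m v σ y
        + δ * ∑ i : Fin n, ∑ j : Fin m, (z i j - w i j) * gradF n m v σ y i j
        - 3 * δ ^ 2 * n ^ 2 * m * M :=
  F_swap_step_increase_general n m v hv σ hσ M hM δ hδ0 hδ1 y hy z w hz hw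
end

section
/- Let 0 < ε ≤ 1, set δ = ε/(6mn²), and let M = max_{i∈I, j∈J} v_{ij}. If y ∈ ℝ^{I×J} with y ≥ 0 componentwise and z, w ∈ [0,1]^{I×J} satisfy (z − w)·∇F(y) ≥ εM, then F(y + δ(z − w)) ≥ F(y) + (ε²/(12mn²))·M, i.e., each local-search step increases F by at least ε²M/(12mn²). (Lemma 3.10 of the paper.) -/
/-!
Sort the bins of item `j` by `σ_j` and write `c_i = v_{σ_j(i),j} − v_{σ_j(i+1),j} ≥ 0`,
`S_i = Σ_{k ≤ i} y_{σ_j(k),j}` and `T_i = Σ_{k ≤ i} d_{σ_j(k),j}` with `d = z − w`. The item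
contributes `Σ_i c_i e^{−S_i}(1 − e^{−δT_i})` to the increase of `F`. Since `|δT_i| ≤ δn ≤ 1`,
`1 − e^{−s} ≥ s − s²` bounds this below by its first-order part, which sums over all items to
`δ (z − w)·∇F(y) ≥ δεM`, minus `δ² Σ_i c_i T_i² ≤ δ² n² M` (the `c_i` telescope to at most `M`).
With `δ = ε/(6mn²)` this leaves `5ε²M/(36mn²) ≥ ε²M/(12mn²)`.
-/

open Finset Real

lemma one_sub_exp_neg_ge {s : ℝ} (hs : |s| ≤ 1) : s - s ^ 2 ≤ 1 - exp (-s) := by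
  have h := abs_le.mp (Real.abs_exp_sub_one_sub_id_le (x := -s) (by rwa [abs_neg]))
  nlinarith [h.2]

lemma mul_one_sub_exp_neg_add_ge {c S s : ℝ} (hc : 0 ≤ c) (hS : 0 ≤ S) (hs : |s| ≤ 1) :
    c * (1 - exp (-S)) + c * exp (-S) * s - c * s ^ 2 ≤ c * (1 - exp (-(S + s))) := by
  have hE : exp (-S) ≤ 1 := exp_le_one_iff.mpr (neg_nonpos.mpr hS)
  have key : c * exp (-S) * (s - s ^ 2) ≤ c * exp (-S) * (1 - exp (-s)) :=
    mul_le_mul_of_nonneg_left (one_sub_exp_neg_ge hs) (by positivity)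
  have hsq : c * exp (-S) * s ^ 2 ≤ c * s ^ 2 :=
    mul_le_mul_of_nonneg_right (mul_le_of_le_one_right hc hE) (sq_nonneg s)
  rw [neg_add, exp_add]
  nlinarith

lemma sum_mul_sum_Ici_eq_sum_mul_sum_Iic {α : Type*} [Fintype α] [Preorder α]
    [LocallyFiniteOrderTop α] [LocallyFiniteOrderBot α] (d g : α → ℝ) :
    ∑ k, d k * ∑ l ∈ Ici k, g l = ∑ l, g l * ∑ k ∈ Iic l, d k := by
  simp_rw [mul_sum, mul_comm (g _)]
  exact sum_comm' fun k l => by simp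

section Item

variable {n : ℕ}

def succDiff (u : Fin n → ℝ) (i : Fin n) : ℝ :=
  u i - if h : (i : ℕ) + 1 < n then u ⟨(i : ℕ) + 1, h⟩ else 0

lemma succDiff_nonneg {u : Fin n → ℝ} (hu : Antitone u) (hu0 : ∀ i, 0 ≤ u i) (i : Fin n) :
    0 ≤ succDiff u i := by
  unfold succDiff
  split_ifs with h
  · exact sub_nonneg.mpr (hu (Fin.mk_le_mk.mpr (Nat.le_succ _)))
  · simpa using hu0 i

lemma sum_succDiff [NeZero n] (u : Fin n → ℝ) : ∑ i, succDiff u i = u 0 := by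
  set f : ℕ → ℝ := fun k => if h : k < n then u ⟨k, h⟩ else 0
  have hf : ∀ i : Fin n, succDiff u i = f i - f (i + 1) := fun i => by simp [succDiff, f]
  simp_rw [hf]
  rw [Fin.sum_univ_eq_sum_range (fun i => f i - f (i + 1)), sum_range_sub']
  simp [f, Nat.pos_of_neZero n]

lemma abs_sum_Iic_le {d : Fin n → ℝ} (hd : ∀ k, |d k| ≤ 1) (i : Fin n) :
    |∑ k ∈ Iic i, d k| ≤ n :=
  calc |∑ k ∈ Iic i, d k| ≤ ∑ k ∈ Iic i, |d k| := abs_sum_le_sum_abs _ _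
    _ ≤ ∑ _k : Fin n, (1 : ℝ) :=
      sum_le_sum_of_subset_of_nonneg (subset_univ _) (fun _ _ _ => abs_nonneg _) |>.trans
        (sum_le_sum fun k _ => hd k)
    _ = n := by simp

lemma sum_mul_sq_sum_Iic_le {c d : Fin n → ℝ} (hc : ∀ i, 0 ≤ c i) (hd : ∀ k, |d k| ≤ 1) :
    ∑ i, c i * (∑ k ∈ Iic i, d k) ^ 2 ≤ n ^ 2 * ∑ i, c i := by
  rw [mul_sum]
  refine sum_le_sum fun i _ => ?_
  rw [mul_comm]
  refine mul_le_mul_of_nonneg_right ?_ (hc i)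
  exact sq_le_sq' (abs_le.mp (abs_sum_Iic_le hd i)).1 (abs_le.mp (abs_sum_Iic_le hd i)).2

noncomputable def itemValue (c x : Fin n → ℝ) : ℝ :=
  ∑ i, c i * (1 - exp (-∑ k ∈ Iic i, x k))

lemma itemValue_add_mul_ge {c x : Fin n → ℝ} (d : Fin n → ℝ) {t : ℝ} (hc : ∀ i, 0 ≤ c i)
    (hx : ∀ k, 0 ≤ x k) (ht : ∀ i, |t * ∑ k ∈ Iic i, d k| ≤ 1) :
    itemValue c x + t * ∑ i, c i * exp (-∑ k ∈ Iic i, x k) * ∑ k ∈ Iic i, d k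
        - t ^ 2 * ∑ i, c i * (∑ k ∈ Iic i, d k) ^ 2
      ≤ itemValue c (fun k => x k + t * d k) := by
  unfold itemValue
  simp_rw [mul_sum, ← sum_add_distrib, ← sum_sub_distrib, sum_add_distrib (f := x), ← mul_sum]
  refine sum_le_sum fun i _ => ?_
  have h := mul_one_sub_exp_neg_add_ge (hc i) (sum_nonneg fun k (_ : k ∈ Iic i) => hx k) (ht i)
  linarith

lemma itemValue_succDiff_add_mul_ge {u x d : Fin n → ℝ} [NeZero n] {M t : ℝ} (hu : Antitone u)
    (hu0 : ∀ i, 0 ≤ u i) (huM : u 0 ≤ M) (hx : ∀ k, 0 ≤ x k) (hd : ∀ k, |d k| ≤ 1)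
    (ht0 : 0 ≤ t) (htn : t * n ≤ 1) :
    itemValue (succDiff u) x
        + t * ∑ i, succDiff u i * exp (-∑ k ∈ Iic i, x k) * ∑ k ∈ Iic i, d k
        - t ^ 2 * (n ^ 2 * M)
      ≤ itemValue (succDiff u) (fun k => x k + t * d k) := by
  have hc := succDiff_nonneg hu hu0
  have ht : ∀ i, |t * ∑ k ∈ Iic i, d k| ≤ 1 := fun i => by
    rw [abs_mul, abs_of_nonneg ht0]
    exact (mul_le_mul_of_nonneg_left (abs_sum_Iic_le hd i) ht0).trans htn
  have hquad : ∑ i, succDiff u i * (∑ k ∈ Iic i, d k) ^ 2 ≤ n ^ 2 * M :=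
    (sum_mul_sq_sum_Iic_le hc hd).trans (by rw [sum_succDiff]; gcongr)
  have := itemValue_add_mul_ge d hc hx ht
  nlinarith [mul_le_mul_of_nonneg_left hquad (sq_nonneg t)]

end Item

lemma F_eq_sum_itemValue (n m : ℕ) (v : Fin n → Fin m → ℝ) (σ : Fin m → Equiv.Perm (Fin n))
    (y : Fin n → Fin m → ℝ) :
    F n m v σ y = ∑ j, itemValue (succDiff fun i => v (σ j i) j) (fun k => y (σ j k) j) :=
  rfl

lemma sum_mul_gradF {n m : ℕ} (v : Fin n → Fin m → ℝ) (σ : Fin m → Equiv.Perm (Fin n))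
    (y d : Fin n → Fin m → ℝ) (j : Fin m) :
    ∑ a, d a j * gradF n m v σ y a j
      = ∑ i, succDiff (fun i => v (σ j i) j) i * exp (-∑ k ∈ Iic i, y (σ j k) j)
          * ∑ k ∈ Iic i, d (σ j k) j := by
  rw [← Equiv.sum_comp (σ j)]
  simp only [gradF, Equiv.symm_apply_apply]
  exact sum_mul_sum_Ici_eq_sum_mul_sum_Iic _ _

theorem local_search_progress_general (n m : ℕ)
    (v : Fin n → Fin m → ℝ) (hv : ∀ i j, 0 ≤ v i j)
    (σ : Fin m → Equiv.Perm (Fin n))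
    (hσ : ∀ j, Antitone fun i => v (σ j i) j)
    (M : ℝ) (hM : IsGreatest {t : ℝ | ∃ i j, t = v i j} M)
    (ε : ℝ) (hε0 : 0 < ε) (hε1 : ε ≤ 1)
    (δ : ℝ) (hδ : δ = ε / (6 * m * n ^ 2))
    (y : Fin n → Fin m → ℝ) (hy : ∀ i j, 0 ≤ y i j)
    (z w : Fin n → Fin m → ℝ)
    (hz : ∀ i j, z i j ∈ Set.Icc (0 : ℝ) 1) (hw : ∀ i j, w i j ∈ Set.Icc (0 : ℝ) 1)
    (hdir : ∑ i : Fin n, ∑ j : Fin m, (z i j - w i j) * gradF n m v σ y i j ≥ ε * M) :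
    F n m v σ (fun i j => y i j + δ * (z i j - w i j))
      ≥ F n m v σ y + ε ^ 2 / (12 * m * n ^ 2) * M := by
  obtain ⟨⟨i₀, j₀, hM₀⟩, hvM⟩ := hM
  have hM0 : 0 ≤ M := hM₀ ▸ hv i₀ j₀
  have : NeZero n := NeZero.of_pos i₀.pos
  have hn : (1 : ℝ) ≤ n := by exact_mod_cast i₀.pos
  have hm : (1 : ℝ) ≤ m := by exact_mod_cast j₀.pos
  have hδ0 : 0 ≤ δ := hδ ▸ by positivity
  have hδn : δ * n ≤ 1 := by
    rw [hδ, div_mul_eq_mul_div, div_le_one (by positivity)]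
    nlinarith [mul_le_mul hm hn zero_le_one (by positivity)]
  have hstep (j : Fin m) := itemValue_succDiff_add_mul_ge (hσ j) (fun i => hv _ j) (hvM ⟨_, j, rfl⟩)
    (fun k => hy (σ j k) j) (d := fun k => z (σ j k) j - w (σ j k) j)
    (fun k => (Real.dist_eq _ _).symm.trans_le (Real.dist_le_of_mem_Icc_01 (hz _ j) (hw _ j)))
    hδ0 hδn
  have hF : F n m v σ y + δ * (ε * M) - δ ^ 2 * (m * (n ^ 2 * M))
      ≤ F n m v σ (fun i j => y i j + δ * (z i j - w i j)) := by
    have hsum := sum_le_sum fun j (_ : j ∈ univ) => hstep j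
    rw [sum_sub_distrib, sum_add_distrib, ← mul_sum, sum_const, card_univ, Fintype.card_fin,
      nsmul_eq_mul] at hsum
    simp only [← sum_mul_gradF v σ y (fun i j => z i j - w i j)] at hsum
    rw [sum_comm] at hdir
    rw [F_eq_sum_itemValue, F_eq_sum_itemValue]
    linarith [mul_le_mul_of_nonneg_left hdir.le hδ0]
  have hgain : ε ^ 2 / (12 * m * n ^ 2) * M ≤ δ * (ε * M) - δ ^ 2 * (m * (n ^ 2 * M)) := by
    rw [hδ]
    field_simp
    nlinarith [mul_nonneg (mul_nonneg (sq_nonneg ε) hM0) (by positivity : (0 : ℝ) ≤ m * n ^ 2)]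
  linarith

/-- Lemma 3.10: with `δ = ε/(6mn²)`, if the local-search direction satisfies
`(z − w)·∇F(y) ≥ εM`, then the step increases `F` by at least `ε²M/(12mn²)`. -/
theorem local_search_progress (n m : ℕ) (hn : 1 ≤ n) (hm : 1 ≤ m)
    (v : Fin n → Fin m → ℝ) (hv : ∀ i j, 0 ≤ v i j)
    (σ : Fin m → Equiv.Perm (Fin n))
    (hσ : ∀ j, Antitone fun i => v (σ j i) j)
    (M : ℝ) (hM : IsGreatest {t : ℝ | ∃ i j, t = v i j} M)
    (ε : ℝ) (hε0 : 0 < ε) (hε1 : ε ≤ 1)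
    (δ : ℝ) (hδ : δ = ε / (6 * m * n ^ 2))
    (y : Fin n → Fin m → ℝ) (hy : ∀ i j, 0 ≤ y i j)
    (z w : Fin n → Fin m → ℝ)
    (hz : ∀ i j, z i j ∈ Set.Icc (0 : ℝ) 1) (hw : ∀ i j, w i j ∈ Set.Icc (0 : ℝ) 1)
    (hdir : ∑ i : Fin n, ∑ j : Fin m, (z i j - w i j) * gradF n m v σ y i j ≥ ε * M) :
    F n m v σ (fun i j => y i j + δ * (z i j - w i j))
      ≥ F n m v σ y + ε ^ 2 / (12 * m * n ^ 2) * M :=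
  local_search_progress_general n m v hv σ hσ M hM ε hε0 hε1 δ hδ y hy z w hz hw hdir
end
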